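/- arXiv:2109.07975 — 6 statements merged into one kernel-verified Lean document; each statement's English description precedes it below -/
import Mathlib

section
/- If F : ℝ^m → ℝ^m is monotone and u* satisfies F(u*) = 0, then for the continuous-time golden ratio dynamics ż = -z + u, u̇ = -u + z - F(u), the Lyapunov function V(u,z) = ½‖z - u*‖² + ½‖u - u*‖² satisfies V̇(u,z) = -‖u - z‖² - ⟨u - u*, F(u) - F(u*)⟩ ≤ -‖u - z‖² along solutions. -/
open RealInnerProductSpace

section

variable {E : Type*} [NormedAddCommGroup E] [InnerProductSpace ℝ E]

theorem HasDerivAt.half_norm_sub_sq {x : ℝ → E} {x' : E} {t : ℝ} (hx : HasDerivAt x x' t)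
    (c : E) : HasDerivAt (fun s => ‖x s - c‖ ^ 2 / 2) ⟪x t - c, x'⟫ t := by
  simpa only [mul_div_cancel_left₀ _ (two_ne_zero : (2 : ℝ) ≠ 0)] using
    (hx.sub_const c).norm_sq.div_const 2

theorem inner_goldenRatioDynamics_eq (u z c w : E) :
    ⟪z - c, -z + u⟫ + ⟪u - c, -u + z - w⟫ = -‖u - z‖ ^ 2 - ⟪u - c, w⟫ := by
  rw [← real_inner_self_eq_norm_sq]
  simp only [inner_sub_left, inner_add_right, inner_sub_right, inner_neg_right,
    real_inner_comm u z]
  ring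

theorem hasDerivAt_goldenRatioLyapunov {F : E → E} {ustar : E} (hzero : F ustar = 0)
    {z u : ℝ → E} {t : ℝ} (hz : HasDerivAt z (-z t + u t) t)
    (hu : HasDerivAt u (-u t + z t - F (u t)) t) :
    HasDerivAt (fun s => ‖z s - ustar‖ ^ 2 / 2 + ‖u s - ustar‖ ^ 2 / 2)
      (-‖u t - z t‖ ^ 2 - ⟪u t - ustar, F (u t) - F ustar⟫) t := by
  rw [hzero, sub_zero, ← inner_goldenRatioDynamics_eq]
  exact (hz.half_norm_sub_sq ustar).add (hu.half_norm_sub_sq ustar)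

end

/-- Along the golden-ratio dynamics ż = -z + u, u̇ = -u + z - F(u), with F monotone
and F(u*) = 0, the Lyapunov function V(u,z) = ½‖z-u*‖² + ½‖u-u*‖² satisfies
V̇ = -‖u-z‖² - ⟨u-u*, F(u)-F(u*)⟩ ≤ -‖u-z‖². -/
theorem stmt0 {m : ℕ} (F : EuclideanSpace ℝ (Fin m) → EuclideanSpace ℝ (Fin m))
    (hmono : ∀ u v, 0 ≤ ⟪u - v, F u - F v⟫)
    (ustar : EuclideanSpace ℝ (Fin m)) (hzero : F ustar = 0)
    (z u : ℝ → EuclideanSpace ℝ (Fin m))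
    (hz : ∀ t, HasDerivAt z (-z t + u t) t)
    (hu : ∀ t, HasDerivAt u (-u t + z t - F (u t)) t) :
    ∀ t : ℝ,
      HasDerivAt (fun s => ‖z s - ustar‖ ^ 2 / 2 + ‖u s - ustar‖ ^ 2 / 2)
        (-‖u t - z t‖ ^ 2 - ⟪u t - ustar, F (u t) - F ustar⟫) t ∧
      -‖u t - z t‖ ^ 2 - ⟪u t - ustar, F (u t) - F ustar⟫ ≤ -‖u t - z t‖ ^ 2 :=
  fun t => ⟨hasDerivAt_goldenRatioLyapunov hzero (hz t) (hu t),
    sub_le_self _ (hmono (u t) ustar)⟩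
end

section
/- For a continuously differentiable monotone map F : ℝ^m → ℝ^m with nonempty zero set S = {u : F(u) = 0}, the set A = {(u,u) : u ∈ S} is globally asymptotically stable for the system ż = -z + u, u̇ = -u + z - F(u): every solution is bounded (V is nonincreasing) and converges to A. -/
/-!
With `V = ½‖u - u*‖² + ½‖z - u*‖²` one computes `V̇ = -‖u - z‖² - ⟪u - u*, F u⟫ ≤ -‖u - z‖²`
by monotonicity, so `V` decreases and the trajectory stays in a compact ball. There the vector
field is bounded and every continuous function of the state is uniformly continuous along the
trajectory. Barbalat's lemma (a convergent function with uniformly continuous derivative has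
derivative tending to `0`) applied to `V` gives `V̇ → 0`, hence `u - z → 0`; applied to
`w = u - z`, with `ẇ = -2w - F u`, it gives `F u → 0`. Since the state stays in a compact set,
`u - z → 0` and `F u → 0` force the distance to `{(u, u) : F u = 0}` to tend to `0`.
-/

open RealInnerProductSpace Filter Topology Set Metric

theorem tendsto_deriv_atTop_zero_of_tendsto {E : Type*} [NormedAddCommGroup E] [NormedSpace ℝ E]
    {f f' : ℝ → E} {a : E} (hf : ∀ t, HasDerivAt f (f' t) t) (hlim : Tendsto f atTop (𝓝 a))
    (hf' : UniformContinuousOn f' (Ici 0)) : Tendsto f' atTop (𝓝 0) := by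
  rw [Metric.tendsto_atTop]
  intro ε hε
  obtain ⟨δ, hδ, hclose⟩ := Metric.uniformContinuousOn_iff.1 hf' (ε / 2) (half_pos hε)
  set h := δ / 2 with h_def
  have hh : 0 < h := half_pos hδ
  have hinc : Tendsto (fun t => f (t + h) - f t) atTop (𝓝 0) := by
    simpa using (hlim.comp (tendsto_atTop_add_const_right _ h tendsto_id)).sub hlim
  obtain ⟨N, hN⟩ := Metric.tendsto_atTop.1 hinc (ε / 2 * h) (by positivity)
  refine ⟨max N 0, fun t ht => ?_⟩
  have ht0 : 0 ≤ t := le_of_max_le_right ht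
  -- on `[t, t + h]` the derivative `f' s - f' t` of `s ↦ f s - s • f' t` is `ε / 2`-small
  have hmvt : ‖f (t + h) - (t + h) • f' t - (f t - t • f' t)‖ ≤ ε / 2 * (t + h - t) := by
    refine norm_image_sub_le_of_norm_deriv_le_segment' (f := fun s => f s - s • f' t)
      (f' := fun s => f' s - f' t) (fun s _ => ?_) (fun s hs => ?_) (t + h) ⟨by linarith, le_rfl⟩
    · have hd := (hf s).sub ((hasDerivAt_id s).smul_const (f' t))
      rw [one_smul] at hd
      exact hd.hasDerivWithinAt
    · rw [← dist_eq_norm]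
      refine (hclose s (ht0.trans hs.1) t ht0 ?_).le
      rw [Real.dist_eq, abs_of_nonneg (by linarith [hs.1])]
      linarith [hs.2, h_def]
  have hsplit : h • f' t =
      (f (t + h) - f t) - (f (t + h) - (t + h) • f' t - (f t - t • f' t)) := by
    rw [add_smul]; abel
  have hnorm : h * ‖f' t‖ < h * ε := by
    have hinc_t := hN t (le_of_max_le_left ht)
    rw [dist_zero_right] at hinc_t
    calc h * ‖f' t‖ = ‖h • f' t‖ := by rw [norm_smul, Real.norm_of_nonneg hh.le]
      _ ≤ ‖f (t + h) - f t‖ + ε / 2 * (t + h - t) := hsplit ▸ (norm_sub_le _ _).trans (by gcongr)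
      _ < ε / 2 * h + ε / 2 * h := by linarith
      _ = h * ε := by ring
  simpa using lt_of_mul_lt_mul_left hnorm hh.le

theorem uniformContinuousOn_of_hasDerivWithinAt_mem_compact {E : Type*} [NormedAddCommGroup E]
    [NormedSpace ℝ E] {X : E → E} {γ : ℝ → E} {s : Set ℝ} {K : Set E} (hs : Convex ℝ s)
    (hK : IsCompact K) (hX : ContinuousOn X K) (hγK : MapsTo γ s K)
    (hγ : ∀ t ∈ s, HasDerivWithinAt γ (X (γ t)) s t) : UniformContinuousOn γ s := by
  obtain ⟨C, hC⟩ := (hK.image_of_continuousOn hX.nnnorm).bddAbove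
  exact (hs.lipschitzOnWith_of_nnnorm_hasDerivWithin_le hγ
    fun t ht => hC (mem_image_of_mem _ (hγK ht))).uniformContinuousOn

theorem IsCompact.uniformContinuousOn_comp {α β δ : Type*} [UniformSpace α] [UniformSpace β]
    [UniformSpace δ] {K : Set β} (hK : IsCompact K) {Ψ : β → δ} (hΨ : ContinuousOn Ψ K)
    {γ : α → β} {s : Set α} (hγ : UniformContinuousOn γ s) (hγK : MapsTo γ s K) :
    UniformContinuousOn (fun t => Ψ (γ t)) s :=
  (hK.uniformContinuousOn_of_continuous hΨ).comp hγ hγK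

theorem tendsto_infDist_preimage_of_tendsto {ι X Y : Type*} [PseudoMetricSpace X]
    [TopologicalSpace Y] [T2Space Y] {l : Filter ι} {γ : ι → X} {K : Set X} (hK : IsCompact K)
    (hγK : ∀ᶠ i in l, γ i ∈ K) {Φ : X → Y} (hΦ : Continuous Φ) {y : Y}
    (hγ : Tendsto (fun i => Φ (γ i)) l (𝓝 y)) :
    Tendsto (fun i => infDist (γ i) (Φ ⁻¹' {y})) l (𝓝 0) := by
  rw [Metric.tendsto_nhds]
  intro ε hε
  set Kfar := K ∩ {x | ε ≤ infDist x (Φ ⁻¹' {y})}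
  have hKfar : IsCompact Kfar :=
    hK.inter_right (isClosed_le continuous_const (continuous_infDist_pt _))
  have hy : y ∉ Φ '' Kfar := by
    rintro ⟨x, ⟨-, hx⟩, hxy⟩
    exact (infDist_zero_of_mem (s := Φ ⁻¹' {y}) hxy).not_gt (hε.trans_le hx)
  filter_upwards [hγK, hγ ((hKfar.image hΦ).isClosed.isOpen_compl.mem_nhds hy)] with i hiK hi
  rw [Real.dist_0_eq_abs, abs_of_nonneg infDist_nonneg]
  by_contra! hfar
  exact hi ⟨γ i, ⟨hiK, hfar⟩, rfl⟩

section Lyapunov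

variable {E : Type*} [NormedAddCommGroup E]

noncomputable def lyapunov (us : E) (p : E × E) : ℝ := ‖p.1 - us‖ ^ 2 / 2 + ‖p.2 - us‖ ^ 2 / 2

theorem lyapunov_nonneg (us : E) (p : E × E) : 0 ≤ lyapunov us p := by
  unfold lyapunov; positivity

theorem dist_le_sqrt_lyapunov (us : E) (p : E × E) : dist p (us, us) ≤ √(2 * lyapunov us p) := by
  rw [Prod.dist_eq, max_le_iff, dist_eq_norm, dist_eq_norm,
    Real.le_sqrt (norm_nonneg _) (by linarith [lyapunov_nonneg us p]),
    Real.le_sqrt (norm_nonneg _) (by linarith [lyapunov_nonneg us p])]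
  unfold lyapunov
  constructor <;> nlinarith [sq_nonneg ‖p.1 - us‖, sq_nonneg ‖p.2 - us‖]

variable [InnerProductSpace ℝ E] {F : E → E} {us : E} {u z : ℝ → E}

def lyapunovRate (F : E → E) (us : E) (p : E × E) : ℝ := -‖p.1 - p.2‖ ^ 2 - ⟪p.1 - us, F p.1⟫

theorem hasDerivAt_lyapunov (hz : ∀ t, HasDerivAt z (-z t + u t) t)
    (hu : ∀ t, HasDerivAt u (-u t + z t - F (u t)) t) (us : E) (t : ℝ) :
    HasDerivAt (fun t => lyapunov us (u t, z t)) (lyapunovRate F us (u t, z t)) t := by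
  refine ((((hu t).sub_const us).norm_sq.div_const 2).add
    (((hz t).sub_const us).norm_sq.div_const 2)).congr_deriv ?_
  simp only [lyapunovRate, inner_add_right, inner_sub_right, inner_neg_right,
    ← real_inner_self_eq_norm_sq, inner_sub_left]
  rw [real_inner_comm (u t) (z t)]
  ring

theorem lyapunovRate_le (hmono : ∀ u v, 0 ≤ ⟪u - v, F u - F v⟫) (hus : F us = 0) (p : E × E) :
    lyapunovRate F us p ≤ -‖p.1 - p.2‖ ^ 2 := by
  have hmono_us := hmono p.1 us
  rw [hus, sub_zero] at hmono_us
  unfold lyapunovRate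
  linarith

theorem antitone_lyapunov (hz : ∀ t, HasDerivAt z (-z t + u t) t)
    (hu : ∀ t, HasDerivAt u (-u t + z t - F (u t)) t)
    (hmono : ∀ u v, 0 ≤ ⟪u - v, F u - F v⟫) (hus : F us = 0) :
    Antitone fun t => lyapunov us (u t, z t) :=
  antitone_of_hasDerivAt_nonpos (hasDerivAt_lyapunov hz hu us)
    fun _ => (lyapunovRate_le hmono hus _).trans (neg_nonpos.2 (sq_nonneg _))

theorem mapsTo_closedBall_lyapunov (hz : ∀ t, HasDerivAt z (-z t + u t) t)
    (hu : ∀ t, HasDerivAt u (-u t + z t - F (u t)) t)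
    (hmono : ∀ u v, 0 ≤ ⟪u - v, F u - F v⟫) (hus : F us = 0) :
    MapsTo (fun t => (u t, z t)) (Ici 0) (closedBall (us, us) √(2 * lyapunov us (u 0, z 0))) :=
  fun t ht => (dist_le_sqrt_lyapunov us (u t, z t)).trans
    (Real.sqrt_le_sqrt (by linarith [antitone_lyapunov hz hu hmono hus (mem_Ici.1 ht)]))

theorem tendsto_sub_of_tendsto_lyapunovRate (hmono : ∀ u v, 0 ≤ ⟪u - v, F u - F v⟫)
    (hus : F us = 0) {ι : Type*} {l : Filter ι} {γ : ι → E × E}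
    (h : Tendsto (fun i => lyapunovRate F us (γ i)) l (𝓝 0)) :
    Tendsto (fun i => (γ i).1 - (γ i).2) l (𝓝 0) := by
  refine squeeze_zero_norm (fun i => ?_) (by simpa using h.neg.sqrt)
  have hrate := lyapunovRate_le hmono hus (γ i)
  rw [Real.le_sqrt (norm_nonneg _) (by linarith [sq_nonneg ‖(γ i).1 - (γ i).2‖])]
  linarith

end Lyapunov

/-- For a locally Lipschitz monotone F with nonempty zero set S, the set
A = {(u,u) : u ∈ S} attracts every solution of ż = -z+u, u̇ = -u+z-F(u):
every solution is bounded and dist((u(t),z(t)), A) → 0 as t → ∞. -/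
theorem stmt3 {m : ℕ} (F : EuclideanSpace ℝ (Fin m) → EuclideanSpace ℝ (Fin m))
    (hLip : LocallyLipschitz F)
    (hmono : ∀ u v, 0 ≤ ⟪u - v, F u - F v⟫)
    (hS : ∃ ustar, F ustar = 0)
    (z u : ℝ → EuclideanSpace ℝ (Fin m))
    (hz : ∀ t, HasDerivAt z (-z t + u t) t)
    (hu : ∀ t, HasDerivAt u (-u t + z t - F (u t)) t) :
    (∃ R : ℝ, ∀ t ≥ (0:ℝ), ‖u t‖ ≤ R ∧ ‖z t‖ ≤ R) ∧
      Filter.Tendsto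
        (fun t => Metric.infDist (u t, z t)
          {p : EuclideanSpace ℝ (Fin m) × EuclideanSpace ℝ (Fin m) |
            p.1 = p.2 ∧ F p.1 = 0})
        Filter.atTop (nhds 0) := by
  obtain ⟨us, hus⟩ := hS
  have hF : Continuous F := hLip.continuous
  set γ := fun t => (u t, z t)
  set K := closedBall (us, us) √(2 * lyapunov us (γ 0))
  have hγK : MapsTo γ (Ici 0) K := mapsTo_closedBall_lyapunov hz hu hmono hus
  refine ⟨⟨‖(us, us)‖ + √(2 * lyapunov us (γ 0)), fun t ht => ?_⟩, ?_⟩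
  · simpa [Prod.norm_def] using norm_le_of_mem_closedBall (hγK ht)
  have hK : IsCompact K := isCompact_closedBall _ _
  have hγ : UniformContinuousOn γ (Ici 0) :=
    uniformContinuousOn_of_hasDerivWithinAt_mem_compact (convex_Ici 0) hK
      (X := fun p => (-p.1 + p.2 - F p.1, -p.2 + p.1)) (by fun_prop) hγK
      fun t _ => ((hu t).prodMk (hz t)).hasDerivWithinAt
  have hrate : Tendsto (fun t => lyapunovRate F us (γ t)) atTop (𝓝 0) :=
    tendsto_deriv_atTop_zero_of_tendsto (hasDerivAt_lyapunov hz hu us)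
      (tendsto_atTop_ciInf (antitone_lyapunov hz hu hmono hus)
        ⟨0, by rintro _ ⟨t, rfl⟩; exact lyapunov_nonneg _ _⟩)
      (hK.uniformContinuousOn_comp (by unfold lyapunovRate; fun_prop) hγ hγK)
  have hw : Tendsto (fun t => u t - z t) atTop (𝓝 0) :=
    tendsto_sub_of_tendsto_lyapunovRate hmono hus hrate
  -- `(e :)` elaborates `e` before unifying it with the stated type; unifying first is very slow
  have hw'_uc : UniformContinuousOn (fun t => -u t + z t - F (u t) - (-z t + u t)) (Ici 0) :=
    (hK.uniformContinuousOn_comp (Ψ := fun p : _ × _ => -p.1 + p.2 - F p.1 - (-p.2 + p.1))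
      (by fun_prop) hγ hγK :)
  have hw' := tendsto_deriv_atTop_zero_of_tendsto (fun t => (hu t).sub (hz t)) hw hw'_uc
  have hFu : Tendsto (fun t => F (u t)) atTop (𝓝 0) := by
    convert hw'.neg.sub (hw.const_smul 2) using 1
    · funext t; module
    · simp
  convert tendsto_infDist_preimage_of_tendsto hK (eventually_atTop.2 ⟨0, fun t ht => hγK ht⟩)
    (Φ := fun p => (p.1 - p.2, F p.1)) (by fun_prop) (hw.prodMk_nhds hFu) using 3
  ext p
  simp [sub_eq_zero]
end

section
/- In contrast, for the skew game F(u₁,u₂) = (u₂ - b, -(u₁ - a)), every solution of the golden-ratio dynamics ż = -z + u, u̇ = -u + z - F(u) on ℝ⁴ converges to the point (a, b, a, b), i.e., the set A = {(u,z) : u = z = (a,b)} is globally asymptotically stable. -/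
/-!
Identify `(x, y)` with `x + y i`. Then `F(u) = -i (u - p)` with `p = a + b i`, and the dynamics
become the linear complex system `z' = u - z`, `u' = z - u + i (u - p)`. Its characteristic
polynomial is `μ² + (2 - i) μ - i`, with roots `(±√3 - 2 + i) / 2`; for each root `μ` the
combination `(z - p) + (μ + 1)(u - p)` solves `f' = μ f`, and both roots have real part
`(±√3 - 2) / 2 < 0`. The two decaying combinations determine `z - p` and `u - p`.
-/

open Complex Filter Topology

lemma eq_mul_cexp_of_hasDerivAt {c : ℂ} {f : ℝ → ℂ} (hf : ∀ t, HasDerivAt f (c * f t) t)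
    (t : ℝ) : f t = f 0 * exp (c * t) := by
  have hg : ∀ s : ℝ, HasDerivAt (fun s : ℝ => f s * exp (-c * s)) 0 s := by
    intro s
    have hlin : HasDerivAt (fun s : ℝ => -c * s) (-c) s := by
      simpa using (hasDerivAt_id s).ofReal_comp.const_mul (-c)
    refine ((hf s).mul hlin.cexp).congr_deriv ?_
    ring
  have hconst := is_const_of_deriv_eq_zero (fun s => (hg s).differentiableAt)
    (fun s => (hg s).deriv) t 0
  simp only [ofReal_zero, mul_zero, exp_zero, mul_one] at hconst
  rw [← hconst, mul_assoc, ← exp_add]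
  simp

lemma tendsto_zero_of_hasDerivAt_mul {c : ℂ} (hc : c.re < 0) {f : ℝ → ℂ}
    (hf : ∀ t, HasDerivAt f (c * f t) t) : Tendsto f atTop (𝓝 0) := by
  rw [tendsto_zero_iff_norm_tendsto_zero]
  have hnorm : (fun t => ‖f t‖) = fun t => ‖f 0‖ * Real.exp (c.re * t) := by
    ext t
    rw [eq_mul_cexp_of_hasDerivAt hf t, norm_mul, norm_exp, re_mul_ofReal]
  rw [hnorm]
  simpa using
    (Real.tendsto_exp_atBot.comp (tendsto_id.const_mul_atTop_of_neg hc)).const_mul ‖f 0‖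

lemma tendsto_zero_of_add_mul_tendsto_zero {α : Type*} {l : Filter α} {v w : α → ℂ}
    {p q : ℂ} (hpq : p ≠ q) (hp : Tendsto (fun t => v t + p * w t) l (𝓝 0))
    (hq : Tendsto (fun t => v t + q * w t) l (𝓝 0)) :
    Tendsto v l (𝓝 0) ∧ Tendsto w l (𝓝 0) := by
  have hw : Tendsto w l (𝓝 0) := by
    have h := (hp.sub hq).const_mul (p - q)⁻¹
    rw [sub_zero, mul_zero] at h
    refine h.congr fun t => ?_
    field_simp [sub_ne_zero.mpr hpq]
    ring
  refine ⟨?_, hw⟩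
  have h := hp.sub (hw.const_mul p)
  rw [mul_zero, sub_zero] at h
  exact h.congr fun t => by ring

lemma HasDerivAt.ofReal_add_ofReal_mul_I {x y : ℝ → ℝ} {x' y' t : ℝ}
    (hx : HasDerivAt x x' t) (hy : HasDerivAt y y' t) :
    HasDerivAt (fun t => (x t : ℂ) + y t * I) (x' + y' * I) t :=
  hx.ofReal_comp.add (hy.ofReal_comp.mul_const I)

lemma tendsto_of_tendsto_ofReal_add_ofReal_mul_I {α : Type*} {l : Filter α} {x y : α → ℝ}
    {a b : ℝ} (h : Tendsto (fun t => (x t : ℂ) + y t * I) l (𝓝 (a + b * I))) :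
    Tendsto x l (𝓝 a) ∧ Tendsto y l (𝓝 b) := by
  constructor
  · simpa [Function.comp_def] using (continuous_re.tendsto _).comp h
  · simpa [Function.comp_def] using (continuous_im.tendsto _).comp h

section SkewGame

variable {p : ℂ} {z u : ℝ → ℂ}

lemma hasDerivAt_eigencombination (hz : ∀ t, HasDerivAt z (u t - z t) t)
    (hu : ∀ t, HasDerivAt u (z t - u t + I * (u t - p)) t) {μ : ℂ}
    (hμ : μ ^ 2 + (2 - I) * μ - I = 0) (t : ℝ) :
    HasDerivAt (fun t => (z t - p) + (μ + 1) * (u t - p))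
      (μ * ((z t - p) + (μ + 1) * (u t - p))) t := by
  refine (((hz t).sub_const p).add (((hu t).sub_const p).const_mul (μ + 1))).congr_deriv ?_
  linear_combination -(u t - p) * hμ

theorem tendsto_of_hasDerivAt_skew (hz : ∀ t, HasDerivAt z (u t - z t) t)
    (hu : ∀ t, HasDerivAt u (z t - u t + I * (u t - p)) t) :
    Tendsto z atTop (𝓝 p) ∧ Tendsto u atTop (𝓝 p) := by
  have decay : ∀ s : ℝ, s ^ 2 = 3 → s < 2 →
      Tendsto (fun t => (z t - p) + ((s - 2 + I) / 2 + 1) * (u t - p)) atTop (𝓝 0) := by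
    intro s hs hs2
    refine tendsto_zero_of_hasDerivAt_mul ?_ (hasDerivAt_eigencombination hz hu ?_)
    · simp only [div_ofNat_re, add_re, sub_re, ofReal_re, re_ofNat, I_re, add_zero]
      linarith
    · have hs' : (s : ℂ) ^ 2 = 3 := by exact_mod_cast hs
      linear_combination hs' / 4 - I_sq / 4
  have hsq : √3 ^ 2 = 3 := Real.sq_sqrt (by norm_num)
  have hlt : √3 < 2 := by nlinarith [Real.sqrt_nonneg 3]
  have hne : ((√3 : ℝ) - 2 + I) / 2 + 1 ≠ ((-√3 : ℝ) - 2 + I) / 2 + 1 := by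
    intro h
    have hre : √3 = -√3 := by simpa using congrArg re h
    linarith [Real.sqrt_pos.mpr (show (0 : ℝ) < 3 by norm_num)]
  obtain ⟨hz0, hu0⟩ := tendsto_zero_of_add_mul_tendsto_zero hne (decay _ hsq hlt)
    (decay _ (by rwa [neg_sq]) (by linarith [Real.sqrt_nonneg 3]))
  exact ⟨by simpa using hz0.add_const p, by simpa using hu0.add_const p⟩

end SkewGame

/-- For the skew map F(u₁,u₂) = (u₂-b, -(u₁-a)), every solution of the
golden-ratio dynamics ż = -z+u, u̇ = -u+z-F(u) converges to (a,b,a,b). -/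
theorem stmt8 (a b : ℝ) (z₁ z₂ u₁ u₂ : ℝ → ℝ)
    (hz₁ : ∀ t, HasDerivAt z₁ (-z₁ t + u₁ t) t)
    (hz₂ : ∀ t, HasDerivAt z₂ (-z₂ t + u₂ t) t)
    (hu₁ : ∀ t, HasDerivAt u₁ (-u₁ t + z₁ t - (u₂ t - b)) t)
    (hu₂ : ∀ t, HasDerivAt u₂ (-u₂ t + z₂ t - (-(u₁ t - a))) t) :
    Filter.Tendsto u₁ Filter.atTop (nhds a) ∧
    Filter.Tendsto u₂ Filter.atTop (nhds b) ∧
    Filter.Tendsto z₁ Filter.atTop (nhds a) ∧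
    Filter.Tendsto z₂ Filter.atTop (nhds b) := by
  set z : ℝ → ℂ := fun t => (z₁ t : ℂ) + z₂ t * I
  set u : ℝ → ℂ := fun t => (u₁ t : ℂ) + u₂ t * I
  have hz (t : ℝ) : HasDerivAt z (u t - z t) t :=
    ((hz₁ t).ofReal_add_ofReal_mul_I (hz₂ t)).congr_deriv (by push_cast; ring)
  have hu (t : ℝ) : HasDerivAt u (z t - u t + I * (u t - (a + b * I))) t :=
    ((hu₁ t).ofReal_add_ofReal_mul_I (hu₂ t)).congr_deriv
      (by push_cast; linear_combination (b - u₂ t : ℂ) * I_sq)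
  obtain ⟨hz_lim, hu_lim⟩ := tendsto_of_hasDerivAt_skew hz hu
  obtain ⟨hz₁_lim, hz₂_lim⟩ := tendsto_of_tendsto_ofReal_add_ofReal_mul_I hz_lim
  obtain ⟨hu₁_lim, hu₂_lim⟩ := tendsto_of_tendsto_ofReal_add_ofReal_mul_I hu_lim
  exact ⟨hu₁_lim, hu₂_lim, hz₁_lim, hz₂_lim⟩
end

section
/- Let F : ℝ^m → ℝ^m be monotone with F(u*) = 0, and let Γ, E be diagonal positive definite matrices. Then along the scaled dynamics ż = ΓE(-z + u), u̇ = ΓE(-u + z - F(u)), the weighted Lyapunov function V(u,z) = ½‖z - u*‖²_{(ΓE)^{-1}} + ½‖u - u*‖²_{(ΓE)^{-1}} satisfies V̇ ≤ -‖u - z‖². -/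
/-!
Differentiating `V` along the flow, the gains `γᵢεᵢ` cancel against the weights `1/(γᵢεᵢ)`,
leaving `V̇ = ⟪z - u*, u - z⟫ + ⟪u - u*, z - u - F u⟫ = -‖u - z‖² - ⟪u - u*, F u - F u*⟫`,
and the last inner product is nonnegative by monotonicity of `F`.
-/

open RealInnerProductSpace

section InnerProductSpace

variable {E : Type*} [NormedAddCommGroup E] [InnerProductSpace ℝ E]

theorem inner_sub_add_inner_sub_sub (a z u w : E) :
    ⟪z - a, u - z⟫ + ⟪u - a, z - u - w⟫ = -‖u - z‖ ^ 2 - ⟪u - a, w⟫ := by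
  have hzu : ⟪z - a, u - z⟫ + ⟪u - a, z - u⟫ = -‖u - z‖ ^ 2 := by
    rw [← neg_sub u z, inner_neg_right, ← sub_eq_add_neg, ← inner_sub_left,
      sub_sub_sub_cancel_right, ← neg_sub u z, inner_neg_left, real_inner_self_eq_norm_sq]
  rw [inner_sub_right (u - a), ← hzu]
  ring

theorem inner_sub_map_nonneg_of_map_eq_zero {F : E → E}
    (hmono : ∀ u v, 0 ≤ ⟪u - v, F u - F v⟫) {a : E} (ha : F a = 0) (u : E) :
    0 ≤ ⟪u - a, F u⟫ := by
  simpa [ha] using hmono u a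

end InnerProductSpace

theorem HasDerivAt.const_inv_mul_sq_sub_div_two {x : ℝ → ℝ} {c v t : ℝ} (a : ℝ) (hc : c ≠ 0)
    (hx : HasDerivAt x (c * v) t) :
    HasDerivAt (fun s => 1 / c * ((x s - a) ^ 2 / 2)) ((x t - a) * v) t := by
  refine ((((hx.sub_const a).fun_pow 2).div_const 2).const_mul (1 / c)).congr_deriv ?_
  field_simp
  ring

theorem hasDerivAt_sum_weighted_sq_sub {m : ℕ} {c : Fin m → ℝ} (hc : ∀ i, c i ≠ 0)
    {x y : ℝ → EuclideanSpace ℝ (Fin m)} {v w : EuclideanSpace ℝ (Fin m)} {t : ℝ}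
    (hx : ∀ i, HasDerivAt (fun s => x s i) (c i * v i) t)
    (hy : ∀ i, HasDerivAt (fun s => y s i) (c i * w i) t) (a b : EuclideanSpace ℝ (Fin m)) :
    HasDerivAt (fun s => ∑ i, 1 / c i * ((x s i - a i) ^ 2 / 2 + (y s i - b i) ^ 2 / 2))
      (⟪x t - a, v⟫ + ⟪y t - b, w⟫) t := by
  have hsum : ⟪x t - a, v⟫ + ⟪y t - b, w⟫ = ∑ i, ((x t i - a i) * v i + (y t i - b i) * w i) := by
    simp only [PiLp.inner_apply, PiLp.sub_apply, RCLike.inner_apply, conj_trivial,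
      ← Finset.sum_add_distrib, mul_comm]
  rw [hsum]
  refine HasDerivAt.fun_sum fun i _ => ?_
  simpa only [mul_add] using
    ((hx i).const_inv_mul_sq_sub_div_two (a i) (hc i)).fun_add
      ((hy i).const_inv_mul_sq_sub_div_two (b i) (hc i))

/-- With diagonal positive gains Γ = diag(γᵢ), E = diag(εᵢ), along the scaled
dynamics żᵢ = γᵢεᵢ(-zᵢ+uᵢ), u̇ᵢ = γᵢεᵢ(-uᵢ+zᵢ-Fᵢ(u)), the weighted Lyapunov
function V = ½‖z-u*‖²_{(ΓE)⁻¹} + ½‖u-u*‖²_{(ΓE)⁻¹} satisfies V̇ ≤ -‖u-z‖². -/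
theorem stmt9 {m : ℕ} (F : EuclideanSpace ℝ (Fin m) → EuclideanSpace ℝ (Fin m))
    (hmono : ∀ u v, 0 ≤ ⟪u - v, F u - F v⟫)
    (ustar : EuclideanSpace ℝ (Fin m)) (hzero : F ustar = 0)
    (γ ε : Fin m → ℝ) (hγ : ∀ i, 0 < γ i) (hε : ∀ i, 0 < ε i)
    (z u : ℝ → EuclideanSpace ℝ (Fin m))
    (hz : ∀ t i, HasDerivAt (fun s => z s i) (γ i * ε i * (-(z t i) + u t i)) t)
    (hu : ∀ t i, HasDerivAt (fun s => u s i)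
      (γ i * ε i * (-(u t i) + z t i - F (u t) i)) t) :
    ∀ t : ℝ, ∃ d : ℝ,
      HasDerivAt (fun s => ∑ i, (1 / (γ i * ε i)) *
          ((z s i - ustar i) ^ 2 / 2 + (u s i - ustar i) ^ 2 / 2)) d t ∧
      d ≤ -‖u t - z t‖ ^ 2 := by
  intro t
  have hgain : ∀ i, γ i * ε i ≠ 0 := fun i => (mul_pos (hγ i) (hε i)).ne'
  have hz' : ∀ i, HasDerivAt (fun s => z s i) (γ i * ε i * (u t - z t) i) t := fun i =>
    (hz t i).congr_deriv (by simp only [PiLp.sub_apply]; ring)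
  have hu' : ∀ i, HasDerivAt (fun s => u s i) (γ i * ε i * (z t - u t - F (u t)) i) t := fun i =>
    (hu t i).congr_deriv (by simp only [PiLp.sub_apply]; ring)
  refine ⟨_, hasDerivAt_sum_weighted_sq_sub hgain hz' hu' ustar ustar, ?_⟩
  rw [inner_sub_add_inner_sub_sub]
  linarith [inner_sub_map_nonneg_of_map_eq_zero hmono hzero (u t)]
end

section
/- Counterexample to projected golden-ratio Lyapunov decrease: there exist a monotone map F on ℝ² (namely F(u₁,u₂) = (u₂, -u₁)), a closed convex set Ω ⊂ ℝ², a point u = z ∈ Ω, and u* ∈ Ω with F(u*) = 0, such that the derivative of V(u,z) = ½‖z - u*‖² + ½‖u - u*‖² along ż = -z + u, u̇ = -u + proj_Ω(z - F(u)) is strictly positive at (u,z). -/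
/-! Take u = z = (1, 0) and Ω the half-plane {w | ⟪(-1, 2), w⟫ ≤ 0}. Then u - F u = (1, 1) lies
outside Ω, and its projection p = (6/5, 3/5) = (1, 1) - (1/5)(-1, 2) onto the boundary line
has ⟪u, p - u⟫ = 1/5 > 0: the rotation F tilts the projected step away from u* = 0. -/

open RealInnerProductSpace

section HalfSpace

variable {E : Type*} [NormedAddCommGroup E] [InnerProductSpace ℝ E]

theorem isClosed_setOf_inner_nonpos (a : E) : IsClosed {w : E | ⟪a, w⟫ ≤ 0} :=
  isClosed_le (continuous_const.inner continuous_id) continuous_const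

theorem convex_setOf_inner_nonpos (a : E) : Convex ℝ {w : E | ⟪a, w⟫ ≤ 0} :=
  convex_halfSpace_le (innerₛₗ ℝ a).isLinear 0

theorem norm_sub_le_norm_sub_of_inner_nonpos {x p w : E} (h : ⟪x - p, w - p⟫ ≤ 0) :
    ‖x - p‖ ≤ ‖x - w‖ := by
  have key : ‖x - w‖ ^ 2 = ‖x - p‖ ^ 2 - 2 * ⟪x - p, w - p⟫ + ‖w - p‖ ^ 2 := by
    rw [← norm_sub_sq_real, sub_sub_sub_cancel_right]
  refine (pow_le_pow_iff_left₀ (norm_nonneg _) (norm_nonneg _) two_ne_zero).1 ?_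
  nlinarith [sq_nonneg ‖w - p‖]

theorem norm_sub_le_of_inner_nonpos_of_sub_eq_smul {a x p w : E} {c : ℝ} (hc : 0 ≤ c)
    (hxp : x - p = c • a) (hp : ⟪a, p⟫ = 0) (hw : ⟪a, w⟫ ≤ 0) : ‖x - p‖ ≤ ‖x - w‖ := by
  apply norm_sub_le_norm_sub_of_inner_nonpos
  rw [hxp, real_inner_smul_left, inner_sub_right, hp, sub_zero]
  exact mul_nonpos_of_nonneg_of_nonpos hc hw

end HalfSpace

theorem EuclideanSpace.inner_vec₂ (a b c d : ℝ) :
    ⟪(!₂[a, b] : EuclideanSpace ℝ (Fin 2)), !₂[c, d]⟫ = a * c + b * d := by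
  simp [PiLp.inner_apply, Fin.sum_univ_two, mul_comm]

/-- Counterexample for the projected golden-ratio scheme: for the monotone map
F(u₁,u₂) = (u₂, -u₁) (with F(0) = 0 and u* = 0), there exist a closed convex set
Ω ∋ 0 and a point u = z ∈ Ω such that the derivative of
V(u,z) = ½‖z‖² + ½‖u‖² along ż = -z+u, u̇ = -u + proj_Ω(z - F(u)) is strictly
positive, namely ⟪u, -u + proj_Ω(u - F(u))⟫ > 0. -/
theorem stmt15 (F : EuclideanSpace ℝ (Fin 2) → EuclideanSpace ℝ (Fin 2))
    (hF : ∀ u, F u 0 = u 1 ∧ F u 1 = -(u 0)) :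
    ∃ (Ω : Set (EuclideanSpace ℝ (Fin 2))) (u p : EuclideanSpace ℝ (Fin 2)),
      IsClosed Ω ∧ Convex ℝ Ω ∧ (0 : EuclideanSpace ℝ (Fin 2)) ∈ Ω ∧ u ∈ Ω ∧
      p ∈ Ω ∧ (∀ w ∈ Ω, ‖u - F u - p‖ ≤ ‖u - F u - w‖) ∧
      0 < ⟪u, -u + p⟫ := by
  let a : EuclideanSpace ℝ (Fin 2) := !₂[-1, 2]
  have hFu : F !₂[1, 0] = !₂[0, -1] := by
    ext i; fin_cases i <;> simp [hF]
  have hp : ⟪a, !₂[6/5, 3/5]⟫ = 0 := by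
    rw [EuclideanSpace.inner_vec₂]; norm_num
  have hxp : !₂[1, 0] - F !₂[1, 0] - !₂[6/5, 3/5] = (1/5 : ℝ) • a := by
    rw [hFu]; ext i; fin_cases i <;> norm_num [a]
  refine ⟨{w | ⟪a, w⟫ ≤ 0}, !₂[1, 0], !₂[6/5, 3/5], isClosed_setOf_inner_nonpos a,
    convex_setOf_inner_nonpos a, by simp, ?_, hp.le,
    fun w hw => norm_sub_le_of_inner_nonpos_of_sub_eq_smul (by norm_num) hxp hp hw, ?_⟩
  · show ⟪a, !₂[1, 0]⟫ ≤ 0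
    rw [EuclideanSpace.inner_vec₂]; norm_num
  · have hstep : -!₂[1, 0] + !₂[6/5, 3/5] = (!₂[1/5, 3/5] : EuclideanSpace ℝ (Fin 2)) := by
      ext i; fin_cases i <;> norm_num
    rw [hstep, EuclideanSpace.inner_vec₂]; norm_num
end

section
/- For the linear monotone map F(u) = Mu with M having positive semidefinite symmetric part, the golden-ratio linear system ż = -z + u, u̇ = -u + z - Mu has all eigenvalues with nonpositive real part, and any eigenvalue with zero real part corresponding to an eigenvector (z₀, u₀) must satisfy u₀ = z₀ and Mu₀ = 0. -/
/-!
Pairing the two eigenvalue equations with `z₀` and `u₀` and adding them gives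
`c (‖z₀‖² + ‖u₀‖²) = -‖z₀ - u₀‖² - ⟪u₀, M u₀⟫`.
On real parts the right-hand side is `≤ 0` by monotonicity of `M`, so `Re c ≤ 0`; and
`Re c = 0` forces both terms to vanish, so `u₀ = z₀`, hence `c z₀ = 0`, `c = 0`, and
then the second equation reads `M u₀ = 0`.
-/

open Matrix ComplexOrder

variable {n : Type*} [Fintype n]

theorem Matrix.re_star_dotProduct_map_ofReal_mulVec (M : Matrix n n ℝ) (v : n → ℂ) :
    (star v ⬝ᵥ M.map Complex.ofReal *ᵥ v).re =
      (fun i ↦ (v i).re) ⬝ᵥ M *ᵥ (fun i ↦ (v i).re) +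
        (fun i ↦ (v i).im) ⬝ᵥ M *ᵥ (fun i ↦ (v i).im) := by
  simp only [dotProduct, mulVec, Finset.mul_sum, Complex.re_sum, ← Finset.sum_add_distrib]
  refine Fintype.sum_congr _ _ fun i ↦ Fintype.sum_congr _ _ fun j ↦ ?_
  simp [Complex.mul_re]

theorem Matrix.re_star_dotProduct_map_ofReal_mulVec_nonneg {M : Matrix n n ℝ}
    (hM : ∀ x : n → ℝ, 0 ≤ x ⬝ᵥ M *ᵥ x) (v : n → ℂ) :
    0 ≤ (star v ⬝ᵥ M.map Complex.ofReal *ᵥ v).re := by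
  rw [re_star_dotProduct_map_ofReal_mulVec]
  exact add_nonneg (hM _) (hM _)

theorem star_dotProduct_self_add_pos {z u : n → ℂ} (h : (z, u) ≠ 0) :
    0 < star z ⬝ᵥ z + star u ⬝ᵥ u := by
  rw [Ne, Prod.mk_eq_zero, not_and_or] at h
  rcases h with hz | hu
  · exact add_pos_of_pos_of_nonneg (dotProduct_star_self_pos_iff.2 hz)
      (dotProduct_star_self_nonneg _)
  · exact add_pos_of_nonneg_of_pos (dotProduct_star_self_nonneg _)
      (dotProduct_star_self_pos_iff.2 hu)

section GoldenRatioSystem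

variable {K : Matrix n n ℂ} {c : ℂ} {z u : n → ℂ}

theorem goldenRatio_energy_identity (hz : -z + u = c • z) (hu : z - u - K *ᵥ u = c • u) :
    c * (star z ⬝ᵥ z + star u ⬝ᵥ u) = -(star (z - u) ⬝ᵥ (z - u)) - star u ⬝ᵥ K *ᵥ u := by
  rw [mul_add, ← smul_eq_mul, ← dotProduct_smul, ← smul_eq_mul c, ← dotProduct_smul, ← hz, ← hu]
  simp only [star_sub, dotProduct_add, dotProduct_sub, sub_dotProduct, dotProduct_neg]
  ring

theorem goldenRatio_re_energy_identity (hz : -z + u = c • z) (hu : z - u - K *ᵥ u = c • u) :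
    c.re * (star z ⬝ᵥ z + star u ⬝ᵥ u).re =
      -(star (z - u) ⬝ᵥ (z - u)).re - (star u ⬝ᵥ K *ᵥ u).re := by
  have hN_im : (star z ⬝ᵥ z + star u ⬝ᵥ u).im = 0 := by
    simp only [Complex.add_im, ← (Complex.le_def.1 (dotProduct_star_self_nonneg _)).2,
      Complex.zero_im, add_zero]
  have h := congrArg Complex.re (goldenRatio_energy_identity hz hu)
  rwa [Complex.mul_re, hN_im, mul_zero, sub_zero, Complex.sub_re, Complex.neg_re] at h

theorem goldenRatio_eigenvalue_re_nonpos (hK : ∀ v, 0 ≤ (star v ⬝ᵥ K *ᵥ v).re)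
    (hne : (z, u) ≠ 0) (hz : -z + u = c • z) (hu : z - u - K *ᵥ u = c • u) :
    c.re ≤ 0 := by
  have hN : 0 < (star z ⬝ᵥ z + star u ⬝ᵥ u).re :=
    (Complex.lt_def.1 (star_dotProduct_self_add_pos hne)).1
  have hD : 0 ≤ (star (z - u) ⬝ᵥ (z - u)).re :=
    (Complex.le_def.1 (dotProduct_star_self_nonneg _)).1
  have key := goldenRatio_re_energy_identity hz hu
  nlinarith [hK u]

theorem goldenRatio_eigenvector_of_re_eq_zero (hK : ∀ v, 0 ≤ (star v ⬝ᵥ K *ᵥ v).re)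
    (hne : (z, u) ≠ 0) (hz : -z + u = c • z) (hu : z - u - K *ᵥ u = c • u) (hc : c.re = 0) :
    u = z ∧ K *ᵥ u = 0 := by
  have key := goldenRatio_re_energy_identity hz hu
  rw [hc, zero_mul] at key
  have hD := dotProduct_star_self_nonneg (z - u)
  have hD0 : star (z - u) ⬝ᵥ (z - u) = 0 := by
    refine Complex.ext ?_ (Complex.le_def.1 hD).2.symm
    linarith [hK u, (Complex.le_def.1 hD).1, Complex.zero_re]
  obtain rfl : u = z := (sub_eq_zero.1 (dotProduct_star_self_eq_zero.1 hD0)).symm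
  have hu0 : u ≠ 0 := fun h ↦ hne (by simp [h])
  obtain rfl : c = 0 := (smul_eq_zero.1 (by simpa using hz.symm)).resolve_right hu0
  exact ⟨rfl, by simpa using hu⟩

end GoldenRatioSystem

/-- For F(u) = Mu with (M+Mᵀ)/2 ⪰ 0, every eigenvalue c of the golden-ratio
system matrix [[-I, I],[I, -I-M]] satisfies Re(c) ≤ 0, and if Re(c) = 0 then the
eigenvector (z₀,u₀) satisfies u₀ = z₀ and Mu₀ = 0. -/
theorem stmt17 {m : ℕ} (M : Matrix (Fin m) (Fin m) ℝ)
    (hM : ∀ x : Fin m → ℝ, 0 ≤ dotProduct x (M.mulVec x)) :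
    ∀ (c : ℂ) (z₀ u₀ : Fin m → ℂ),
      (z₀, u₀) ≠ 0 →
      (-z₀ + u₀ = c • z₀) →
      (z₀ - u₀ - (M.map (Complex.ofReal)).mulVec u₀ = c • u₀) →
      c.re ≤ 0 ∧ (c.re = 0 → u₀ = z₀ ∧ (M.map (Complex.ofReal)).mulVec u₀ = 0) := by
  intro c z₀ u₀ hne hz hu
  have hK := re_star_dotProduct_map_ofReal_mulVec_nonneg hM
  exact ⟨goldenRatio_eigenvalue_re_nonpos hK hne hz hu,
    goldenRatio_eigenvector_of_re_eq_zero hK hne hz hu⟩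
end
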